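/- arXiv:1710.02501 — 2 statements merged into one kernel-verified Lean document; each statement's English description precedes it below -/
import Mathlib

section
/- Let r ≥ 2 and let (P,ℒ) be an r-uniform linear system with |ℒ| > ν₂ and 2-packing number ν₂ ∈ {2,3}. Then (r+1)·τ < |P| + |ℒ| (equivalently, τ < (|P| + |ℒ|)/(r+1)), where τ is the transversal number. -/
/-!
Since ν₂ < |ℒ|, the lines do not form a 2-packing, so two of them, `w₁` and `w₂`, meet in a
point `p`. If ν₂ = 2, every third line is concurrent with `w₁` and `w₂`, hence passes through `p`:
τ ≤ 1, and `r + 1 < |P| + |ℒ|` because one line already has `r` points.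

If ν₂ = 3, no four lines form a 2-packing. Applied to `w₁, w₂` and two lines avoiding `p`, this
forces those two lines to meet in a point of `w₁ ∪ w₂`; so the lines avoiding `p` pairwise meet,
and any three of them are concurrent (otherwise two vertices of their triangle would lie on the
same `wᵢ`). Hence they form a pencil through some `q`, `{p, q}` is a transversal, and
`2(r + 1) < (2r - 1) + 4 ≤ |P| + |ℒ|`.
-/

open Finset

/-- `(P, L)` is a linear system: lines are nonempty subsets of the point set `P`,
and any two distinct lines share at most one point. -/
def IsLinearSystem {α : Type*} [DecidableEq α] (P : Finset α) (L : Finset (Finset α)) : Prop :=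
  (∀ l ∈ L, l.Nonempty) ∧ (∀ l ∈ L, l ⊆ P) ∧
    ∀ l ∈ L, ∀ l' ∈ L, l ≠ l' → (l ∩ l').card ≤ 1

/-- `T` is a transversal of the linear system `(P, L)`. -/
def IsTransversal {α : Type*} [DecidableEq α] (P : Finset α) (L : Finset (Finset α))
    (T : Finset α) : Prop :=
  T ⊆ P ∧ ∀ l ∈ L, (T ∩ l).Nonempty

/-- The transversal number `τ` of `(P, L)`. -/
noncomputable def tau {α : Type*} [DecidableEq α] (P : Finset α) (L : Finset (Finset α)) : ℕ :=
  sInf {n | ∃ T : Finset α, IsTransversal P L T ∧ T.card = n}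

/-- `R` is a 2-packing of `L`: no three distinct lines of `R` have a common point. -/
def Is2Packing {α : Type*} [DecidableEq α] (L R : Finset (Finset α)) : Prop :=
  R ⊆ L ∧ ∀ l₁ ∈ R, ∀ l₂ ∈ R, ∀ l₃ ∈ R,
    l₁ ≠ l₂ → l₁ ≠ l₃ → l₂ ≠ l₃ → l₁ ∩ l₂ ∩ l₃ = ∅

/-- The 2-packing number `ν₂` of `(P, L)`. -/
noncomputable def nu2 {α : Type*} [DecidableEq α] (L : Finset (Finset α)) : ℕ :=
  sSup {n | ∃ R : Finset (Finset α), Is2Packing L R ∧ R.card = n}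

/-- The degree of a point `p`: the number of lines containing `p`. -/
def degree {α : Type*} [DecidableEq α] (L : Finset (Finset α)) (p : α) : ℕ :=
  (L.filter fun l => p ∈ l).card

/-- The maximum degree `Δ` over all points of `P`. -/
def maxDegree {α : Type*} [DecidableEq α] (P : Finset α) (L : Finset (Finset α)) : ℕ :=
  P.sup (degree L)

section

variable {α : Type*} [DecidableEq α] {P : Finset α} {L : Finset (Finset α)}

theorem IsLinearSystem.subset (hLS : IsLinearSystem P L) {L' : Finset (Finset α)}
    (h : L' ⊆ L) : IsLinearSystem P L' :=
  ⟨fun l hl => hLS.1 l (h hl), fun l hl => hLS.2.1 l (h hl),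
    fun l hl l' hl' => hLS.2.2 l (h hl) l' (h hl')⟩

theorem IsLinearSystem.eq_of_mem_of_mem (hLS : IsLinearSystem P L) {l m : Finset α}
    (hl : l ∈ L) (hm : m ∈ L) (hlm : l ≠ m) {x y : α} (hxl : x ∈ l) (hxm : x ∈ m)
    (hyl : y ∈ l) (hym : y ∈ m) : x = y :=
  card_le_one.mp (hLS.2.2 l hl m hm hlm) x (mem_inter.2 ⟨hxl, hxm⟩) y (mem_inter.2 ⟨hyl, hym⟩)

theorem IsLinearSystem.two_mul_le_card_add_one (hLS : IsLinearSystem P L) {r : ℕ}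
    (huniform : ∀ l ∈ L, l.card = r) {l m : Finset α} (hl : l ∈ L) (hm : m ∈ L)
    (hlm : l ≠ m) : 2 * r ≤ P.card + 1 := by
  have hunion := card_union_add_card_inter l m
  have hinter := hLS.2.2 l hl m hm hlm
  have hP := card_le_card (union_subset (hLS.2.1 l hl) (hLS.2.1 m hm))
  rw [huniform l hl, huniform m hm] at hunion
  omega

theorem card_le_nu2 {R : Finset (Finset α)} (hR : Is2Packing L R) : R.card ≤ nu2 L :=
  le_csSup ⟨L.card, fun _ ⟨_, hR', hc⟩ => hc ▸ card_le_card hR'.1⟩ ⟨R, hR, rfl⟩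

theorem tau_le_card {T : Finset α} (hT : IsTransversal P L T) : tau P L ≤ T.card :=
  Nat.sInf_le ⟨T, hT, rfl⟩

theorem isTransversal_singleton {q : α} (hq : q ∈ P) (h : ∀ l ∈ L, q ∈ l) :
    IsTransversal P L {q} :=
  ⟨singleton_subset_iff.2 hq, fun l hl => ⟨q, mem_inter.2 ⟨mem_singleton_self q, h l hl⟩⟩⟩

theorem exists_inter_nonempty_of_nu2_lt_card (h : nu2 L < L.card) :
    ∃ w₁ ∈ L, ∃ w₂ ∈ L, w₁ ≠ w₂ ∧ (w₁ ∩ w₂).Nonempty := by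
  by_contra! hdisj
  refine h.not_ge (card_le_nu2 ⟨Subset.rfl, fun a ha b hb c _ hab _ _ => ?_⟩)
  rw [hdisj a ha b hb hab, empty_inter]

theorem inter_nonempty_of_nu2_le_two (hν : nu2 L ≤ 2) {x y z : Finset α}
    (hx : x ∈ L) (hy : y ∈ L) (hz : z ∈ L) (hxy : x ≠ y) (hxz : x ≠ z) (hyz : y ≠ z) :
    (x ∩ y ∩ z).Nonempty := by
  by_contra! h
  have hR : Is2Packing L {x, y, z} := by
    refine ⟨by simp [insert_subset_iff, *], ?_⟩
    simp only [mem_insert, mem_singleton]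
    rintro a (rfl | rfl | rfl) b (rfl | rfl | rfl) c (rfl | rfl | rfl) hab hac hbc <;>
      simp_all [inter_comm, inter_left_comm]
  have := card_le_nu2 hR
  rw [card_eq_three.2 ⟨x, y, z, hxy, hxz, hyz, rfl⟩] at this
  omega

theorem tau_le_one_of_nu2_le_two (hLS : IsLinearSystem P L) (hν : nu2 L ≤ 2)
    (hL : nu2 L < L.card) : tau P L ≤ 1 := by
  obtain ⟨w₁, hw₁, w₂, hw₂, hw, p, hp⟩ := exists_inter_nonempty_of_nu2_lt_card hL
  rw [mem_inter] at hp
  have hpencil : ∀ l ∈ L, p ∈ l := by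
    intro l hl
    by_contra hpl
    obtain ⟨q, hq⟩ := inter_nonempty_of_nu2_le_two hν hw₁ hw₂ hl hw
      (fun h => hpl (h ▸ hp.1)) (fun h => hpl (h ▸ hp.2))
    simp only [mem_inter] at hq
    exact hpl (hLS.eq_of_mem_of_mem hw₁ hw₂ hw hq.1.1 hq.1.2 hp.1 hp.2 ▸ hq.2)
  exact (tau_le_card (isTransversal_singleton (hLS.2.1 w₁ hw₁ hp.1) hpencil)).trans
    (card_singleton p).le

theorem exists_mem_inter_of_nu2_le_three (hLS : IsLinearSystem P L) (hν : nu2 L ≤ 3)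
    {l l' m m' : Finset α} (hl : l ∈ L) (hl' : l' ∈ L) (hm : m ∈ L) (hm' : m' ∈ L)
    (hll' : l ≠ l') (hmm' : m ≠ m') {p : α} (hpl : p ∈ l) (hpl' : p ∈ l')
    (hpm : p ∉ m) (hpm' : p ∉ m') : ∃ q ∈ m ∩ m', q ∈ l ∨ q ∈ l' := by
  by_contra! h
  have hlm : l ≠ m := fun h => hpm (h ▸ hpl)
  have hlm' : l ≠ m' := fun h => hpm' (h ▸ hpl)
  have hl'm : l' ≠ m := fun h => hpm (h ▸ hpl')
  have hl'm' : l' ≠ m' := fun h => hpm' (h ▸ hpl')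
  have hp : ∀ q ∈ l, q ∈ l' → q = p := fun q hq hq' =>
    hLS.eq_of_mem_of_mem hl hl' hll' hq hq' hpl hpl'
  simp only [mem_inter, and_imp] at h
  -- any three of the four lines contain both lines of one of the two pairs
  have hR : Is2Packing L {l, l', m, m'} := by
    refine ⟨by simp [insert_subset_iff, *], ?_⟩
    simp only [mem_insert, mem_singleton]
    rintro a (rfl | rfl | rfl | rfl) b (rfl | rfl | rfl | rfl) c (rfl | rfl | rfl | rfl)
      hab hac hbc <;> ext q <;> simp only [mem_inter, notMem_empty, iff_false] <;> grind
  have hcard : ({l, l', m, m'} : Finset (Finset α)).card = 4 := by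
    rw [card_insert_of_notMem (by simp [*]), card_insert_of_notMem (by simp [*]),
      card_pair hmm']
  have := card_le_nu2 hR
  omega

theorem inter_nonempty_of_nu2_le_three (hLS : IsLinearSystem P L) (hν : nu2 L ≤ 3)
    {w₁ w₂ : Finset α} (hw₁ : w₁ ∈ L) (hw₂ : w₂ ∈ L) (hw : w₁ ≠ w₂) {p : α} (hp₁ : p ∈ w₁)
    (hp₂ : p ∈ w₂) {x y z : Finset α} (hx : x ∈ L) (hy : y ∈ L) (hz : z ∈ L) (hxy : x ≠ y)
    (hxz : x ≠ z) (hyz : y ≠ z) (hpx : p ∉ x) (hpy : p ∉ y) (hpz : p ∉ z) :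
    (x ∩ y ∩ z).Nonempty := by
  by_contra! h
  have hvertex := fun {m m'} hm hm' hmm' => exists_mem_inter_of_nu2_le_three hLS hν
    (m := m) (m' := m') hw₁ hw₂ hm hm' hw hmm' hp₁ hp₂
  obtain ⟨a, ha, haw⟩ := hvertex hy hz hyz hpy hpz
  obtain ⟨b, hb, hbw⟩ := hvertex hx hz hxz hpx hpz
  obtain ⟨c, hc, hcw⟩ := hvertex hx hy hxy hpx hpy
  simp only [mem_inter] at ha hb hc
  have hxyz : ∀ q, q ∈ x → q ∈ y → q ∈ z → False := fun q hqx hqy hqz => by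
    simpa [h] using mem_inter.2 ⟨mem_inter.2 ⟨hqx, hqy⟩, hqz⟩
  -- the vertices `a, b, c` of the triangle `x y z` lie on `w₁ ∪ w₂`, so two of them lie on the
  -- same `wᵢ`, which then meets a side of the triangle twice
  have hside : ∀ w ∈ L, p ∈ w → ∀ s ∈ L, p ∉ s → ∀ u v, u ∈ w → v ∈ w → u ∈ s → v ∈ s → u = v :=
    fun w hw hpw s hs hps u v huw hvw hus hvs =>
      hLS.eq_of_mem_of_mem hw hs (fun h => hps (h ▸ hpw)) huw hus hvw hvs
  have h₁ := hside w₁ hw₁ hp₁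
  have h₂ := hside w₂ hw₂ hp₂
  grind

theorem exists_transversal_card_le_one (hLS : IsLinearSystem P L)
    (hmeet : ∀ x ∈ L, ∀ y ∈ L, x ≠ y → (x ∩ y).Nonempty)
    (hconc : ∀ x ∈ L, ∀ y ∈ L, ∀ z ∈ L, x ≠ y → x ≠ z → y ≠ z → (x ∩ y ∩ z).Nonempty) :
    ∃ T, IsTransversal P L T ∧ T.card ≤ 1 := by
  rcases L.eq_empty_or_nonempty with rfl | ⟨x, hx⟩
  · exact ⟨∅, ⟨empty_subset P, by simp⟩, by simp⟩
  suffices ∃ q ∈ x, ∀ l ∈ L, q ∈ l by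
    obtain ⟨q, hqx, hq⟩ := this
    exact ⟨{q}, isTransversal_singleton (hLS.2.1 x hx hqx) hq, (card_singleton q).le⟩
  by_cases hmore : ∃ y ∈ L, y ≠ x
  swap
  · obtain ⟨q, hq⟩ := hLS.1 x hx
    refine ⟨q, hq, fun l hl => ?_⟩
    by_contra hql
    exact hmore ⟨l, hl, fun h => hql (h ▸ hq)⟩
  obtain ⟨y, hy, hyx⟩ := hmore
  obtain ⟨q, hq⟩ := hmeet x hx y hy hyx.symm
  rw [mem_inter] at hq
  refine ⟨q, hq.1, fun l hl => ?_⟩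
  by_cases hlx : l = x
  · exact hlx ▸ hq.1
  by_cases hly : l = y
  · exact hly ▸ hq.2
  obtain ⟨q', hq'⟩ := hconc x hx y hy l hl hyx.symm (Ne.symm hlx) (Ne.symm hly)
  simp only [mem_inter] at hq'
  exact hLS.eq_of_mem_of_mem hx hy hyx.symm hq'.1.1 hq'.1.2 hq.1 hq.2 ▸ hq'.2

theorem tau_le_two_of_nu2_le_three (hLS : IsLinearSystem P L) (hν : nu2 L ≤ 3)
    (hL : nu2 L < L.card) : tau P L ≤ 2 := by
  obtain ⟨w₁, hw₁, w₂, hw₂, hw, p, hp⟩ := exists_inter_nonempty_of_nu2_lt_card hL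
  rw [mem_inter] at hp
  obtain ⟨T, hT, hTcard⟩ := exists_transversal_card_le_one (hLS.subset (filter_subset (p ∉ ·) L))
    (fun x hx y hy hxy => by
      rw [mem_filter] at hx hy
      obtain ⟨q, hq, -⟩ := exists_mem_inter_of_nu2_le_three hLS hν hw₁ hw₂ hx.1 hy.1 hw hxy
        hp.1 hp.2 hx.2 hy.2
      exact ⟨q, hq⟩)
    (fun x hx y hy z hz hxy hxz hyz => by
      rw [mem_filter] at hx hy hz
      exact inter_nonempty_of_nu2_le_three hLS hν hw₁ hw₂ hw hp.1 hp.2 hx.1 hy.1 hz.1 hxy hxz hyz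
        hx.2 hy.2 hz.2)
  have hT' : IsTransversal P L (insert p T) := by
    refine ⟨insert_subset (hLS.2.1 w₁ hw₁ hp.1) hT.1, fun l hl => ?_⟩
    by_cases hpl : p ∈ l
    · exact ⟨p, mem_inter.2 ⟨mem_insert_self p T, hpl⟩⟩
    · exact (hT.2 l (mem_filter.2 ⟨hl, hpl⟩)).mono (inter_subset_inter_right (subset_insert p T))
  calc tau P L ≤ (insert p T).card := tau_le_card hT'
    _ ≤ T.card + 1 := card_insert_le p T
    _ ≤ 2 := by omega

end

theorem stmt13_general {α : Type*} [DecidableEq α] (P : Finset α) (L : Finset (Finset α))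
    (r : ℕ) (hLS : IsLinearSystem P L)
    (huniform : ∀ l ∈ L, l.card = r) (hL : nu2 L < L.card)
    (hν : nu2 L = 2 ∨ nu2 L = 3) :
    (r + 1) * tau P L < P.card + L.card := by
  obtain ⟨l, hl, m, hm, hlm, -⟩ := exists_inter_nonempty_of_nu2_lt_card hL
  rcases hν with hν | hν
  · have hτ := tau_le_one_of_nu2_le_two hLS hν.le hL
    have hP : r ≤ P.card := huniform l hl ▸ card_le_card (hLS.2.1 l hl)
    have := Nat.mul_le_mul_left (r + 1) hτ
    omega
  · have hτ := tau_le_two_of_nu2_le_three hLS hν.le hL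
    have hP := hLS.two_mul_le_card_add_one huniform hl hm hlm
    have := Nat.mul_le_mul_left (r + 1) hτ
    omega

/-- Any `r`-uniform linear system (`r ≥ 2`) with `|ℒ| > ν₂` and
`ν₂ ∈ {2,3}` satisfies `(r+1)·τ < |P| + |ℒ|`. -/
theorem stmt13 {α : Type*} [DecidableEq α] (P : Finset α) (L : Finset (Finset α))
    (r : ℕ) (hr : 2 ≤ r) (hLS : IsLinearSystem P L)
    (huniform : ∀ l ∈ L, l.card = r) (hL : nu2 L < L.card)
    (hν : nu2 L = 2 ∨ nu2 L = 3) :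
    (r + 1) * tau P L < P.card + L.card :=
  stmt13_general P L r hLS huniform hL hν
end

section
/- In any linear system (P,ℒ), the number of lines satisfies ν₂ + Δ ≤ |ℒ| + 2, where ν₂ is the 2-packing number and Δ is the maximum degree; that is, |ℒ| ≥ ν₂ + Δ − 2. -/
open Finset

lemma Is2Packing.card_filter_mem_le_two {α : Type*} [DecidableEq α] {L R : Finset (Finset α)}
    (hR : Is2Packing L R) (p : α) : (R.filter fun l => p ∈ l).card ≤ 2 := by
  by_contra! h
  obtain ⟨a, ha, b, hb, c, hc, hab, hac, hbc⟩ := two_lt_card.mp h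
  rw [mem_filter] at ha hb hc
  have hp : p ∈ a ∩ b ∩ c := by simp only [mem_inter]; exact ⟨⟨ha.2, hb.2⟩, hc.2⟩
  simp [hR.2 a ha.1 b hb.1 c hc.1 hab hac hbc] at hp

/-- At most two lines of `R` pass through `p`; the others are lines of `L` missing `p`. -/
lemma Is2Packing.card_add_degree_le {α : Type*} [DecidableEq α] {L R : Finset (Finset α)}
    (hR : Is2Packing L R) (p : α) : R.card + degree L p ≤ L.card + 2 := by
  have hthrough := hR.card_filter_mem_le_two p
  have hmissing : (R.filter fun l => p ∉ l).card ≤ (L.filter fun l => p ∉ l).card :=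
    card_le_card (filter_subset_filter _ hR.1)
  have hR_split := card_filter_add_card_filter_not (s := R) (fun l => p ∈ l)
  have hL_split := card_filter_add_card_filter_not (s := L) (fun l => p ∈ l)
  unfold degree
  omega

lemma exists_is2Packing_card_eq_nu2 {α : Type*} [DecidableEq α] (L : Finset (Finset α)) :
    ∃ R, Is2Packing L R ∧ R.card = nu2 L := by
  have hempty : Is2Packing L ∅ := ⟨empty_subset L, by simp⟩
  refine Nat.sSup_mem (s := {n | ∃ R, Is2Packing L R ∧ R.card = n})
    ⟨0, ∅, hempty, card_empty⟩ ⟨L.card, ?_⟩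
  rintro _ ⟨R, hR, rfl⟩
  exact card_le_card hR.1

theorem stmt14_general {α : Type*} [DecidableEq α] (P : Finset α) (L : Finset (Finset α)) :
    nu2 L + maxDegree P L ≤ L.card + 2 := by
  obtain ⟨R, hR, hcard⟩ := exists_is2Packing_card_eq_nu2 L
  rw [← hcard]
  rcases P.eq_empty_or_nonempty with rfl | hP
  · simpa [maxDegree] using (card_le_card hR.1).trans (Nat.le_add_right _ 2)
  · obtain ⟨p, -, hp⟩ := exists_mem_eq_sup P hP (degree L)
    rw [maxDegree, hp]
    exact hR.card_add_degree_le p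

/-- In any linear system, `ν₂ + Δ ≤ |ℒ| + 2`. -/
theorem stmt14 {α : Type*} [DecidableEq α] (P : Finset α) (L : Finset (Finset α))
    (hLS : IsLinearSystem P L) :
    nu2 L + maxDegree P L ≤ L.card + 2 :=
  stmt14_general P L
end
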